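/- arXiv:2103.10999 — 4 statements merged into one kernel-verified Lean document; each statement's English description precedes it below -/
import Mathlib

section
/- Suppose λ1, λ2, μ1, μ2, η1, η2 > 0 and η1(μ2−λ2) + η2(μ1−λ1) > 0. Then the cubic P(z) = λ1λ2 z^3 − (λ1λ2 + λ1μ2 + λ1η2 + μ1λ2 + η1λ2) z^2 + (λ1μ2 + μ1λ2 + μ1μ2 + μ1η2 + η1μ2) z − μ1μ2 has three real positive roots, exactly one of which lies in (0,1) and two of which are greater than 1. -/
/-- A quadratic vanishing at three distinct points is identically zero. -/
lemma aux_quad_zero (B C D x y z : ℝ) (hxy : x ≠ y) (hxz : x ≠ z) (hyz : y ≠ z)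
    (hx : B*x^2 + C*x + D = 0) (hy : B*y^2 + C*y + D = 0) (hz : B*z^2 + C*z + D = 0) :
    B = 0 ∧ C = 0 ∧ D = 0 := by
  have h1 : (x - y) * (B*(x+y) + C) = 0 := by linear_combination hx - hy
  have h2 : (x - z) * (B*(x+z) + C) = 0 := by linear_combination hx - hz
  have h1' : B*(x+y) + C = 0 := by
    rcases mul_eq_zero.mp h1 with h | h
    · exact absurd (sub_eq_zero.mp h) hxy
    · exact h
  have h2' : B*(x+z) + C = 0 := by
    rcases mul_eq_zero.mp h2 with h | h
    · exact absurd (sub_eq_zero.mp h) hxz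
    · exact h
  have h3 : B * (y - z) = 0 := by linear_combination h1' - h2'
  have hB : B = 0 := by
    rcases mul_eq_zero.mp h3 with h | h
    · exact h
    · exact absurd (sub_eq_zero.mp h) hyz
  have hC : C = 0 := by linear_combination h1' - (x+y) * hB
  have hD : D = 0 := by linear_combination hx - x^2 * hB - x * hC
  exact ⟨hB, hC, hD⟩

/-- A cubic with three distinct roots factors. -/
lemma aux_cubic_factor (a b c d x y z : ℝ) (hxy : x ≠ y) (hxz : x ≠ z) (hyz : y ≠ z)
    (hx : a*x^3 + b*x^2 + c*x + d = 0) (hy : a*y^3 + b*y^2 + c*y + d = 0)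
    (hz : a*z^3 + b*z^2 + c*z + d = 0) :
    ∀ t : ℝ, a*t^3 + b*t^2 + c*t + d = a*(t-x)*(t-y)*(t-z) := by
  obtain ⟨hB, hC, hD⟩ := aux_quad_zero (b + a*(x+y+z)) (c - a*(x*y+x*z+y*z)) (d + a*(x*y*z))
    x y z hxy hxz hyz (by linear_combination hx) (by linear_combination hy)
    (by linear_combination hz)
  intro t
  linear_combination t^2 * hB + t * hC + hD

/-- Key existence lemma: a cubic with positive leading coefficient, negative at 0,
positive at 1, negative at some u > 1, has the required root structure. -/
lemma aux_exists_roots (a b c d u : ℝ) (ha : 0 < a)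
    (h0 : d < 0) (h1 : 0 < a + b + c + d)
    (hu : 1 < u) (hfu : a*u^3 + b*u^2 + c*u + d < 0) :
    ∃ x1 x2 x3 : ℝ,
      (∀ t : ℝ, a*t^3 + b*t^2 + c*t + d = a*(t-x1)*(t-x2)*(t-x3)) ∧
      1 < x1 ∧ 1 < x2 ∧ 0 < x3 ∧ x3 < 1 := by
  have hcont : Continuous (fun t : ℝ => a*t^3 + b*t^2 + c*t + d) := by fun_prop
  set T : ℝ := max u ((|b| + |c| + |d| + 1)/a) with hT
  have hTu : u ≤ T := le_max_left _ _
  have hT1 : 1 < T := lt_of_lt_of_le hu hTu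
  have hTa : |b| + |c| + |d| + 1 ≤ a * T := by
    have h := le_max_right u ((|b| + |c| + |d| + 1)/a)
    calc |b| + |c| + |d| + 1 = a * ((|b| + |c| + |d| + 1)/a) := by field_simp
    _ ≤ a * T := mul_le_mul_of_nonneg_left h ha.le
  have hfT : 0 < a*T^3 + b*T^2 + c*T + d := by
    have hb := neg_abs_le b
    have hc := neg_abs_le c
    have hd := neg_abs_le d
    have hT0 : (1:ℝ) ≤ T := hT1.le
    have p1 : (|b| + |c| + |d| + 1)*T^2 ≤ (a*T)*T^2 :=
      mul_le_mul_of_nonneg_right hTa (sq_nonneg T)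
    have p2 : -|b| * T^2 ≤ b*T^2 := mul_le_mul_of_nonneg_right hb (sq_nonneg T)
    have p3 : -|c| * T ≤ c*T := mul_le_mul_of_nonneg_right hc (by linarith)
    have hT2 : (1:ℝ) ≤ T^2 := by nlinarith
    have hTT : T ≤ T^2 := by nlinarith
    nlinarith [abs_nonneg c, abs_nonneg d, mul_le_mul_of_nonneg_left hTT (abs_nonneg c),
      mul_le_mul_of_nonneg_left hT2 (abs_nonneg d)]
  have hf0 : a*(0:ℝ)^3 + b*0^2 + c*0 + d < 0 := by simpa using h0
  have hf1 : (0:ℝ) < a*(1:ℝ)^3 + b*1^2 + c*1 + d := by nlinarith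
  obtain ⟨x3, hx3mem, hx3⟩ := intermediate_value_Ioo (by norm_num : (0:ℝ) ≤ 1)
    hcont.continuousOn ⟨hf0, hf1⟩
  obtain ⟨x2, hx2mem, hx2⟩ := intermediate_value_Ioo' (le_of_lt hu)
    hcont.continuousOn ⟨hfu, hf1⟩
  obtain ⟨x1, hx1mem, hx1⟩ := intermediate_value_Ioo hTu
    hcont.continuousOn ⟨hfu, hfT⟩
  refine ⟨x1, x2, x3, ?_, hu.trans hx1mem.1, hx2mem.1, hx3mem.1, hx3mem.2⟩
  have h12 : x1 ≠ x2 := by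
    have : x2 < x1 := lt_trans hx2mem.2 hx1mem.1
    exact (ne_of_lt this).symm
  have h13 : x1 ≠ x3 := by
    have : x3 < x1 := by
      have := hx3mem.2; have := hx1mem.1; linarith [hu]
    exact (ne_of_lt this).symm
  have h23 : x2 ≠ x3 := by
    have : x3 < x2 := lt_trans hx3mem.2 hx2mem.1
    exact (ne_of_lt this).symm
  exact aux_cubic_factor a b c d x1 x2 x3 h12 h13 h23 hx1 hx2 hx3

set_option maxHeartbeats 2000000 in
theorem stmt_3 (l1 l2 m1 m2 e1 e2 : ℝ)
    (hl1 : 0 < l1) (hl2 : 0 < l2) (hm1 : 0 < m1) (hm2 : 0 < m2)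
    (he1 : 0 < e1) (he2 : 0 < e2)
    (hstab : 0 < e1*(m2 - l2) + e2*(m1 - l1)) :
    ∃ x1 x2 x3 : ℝ,
      (∀ z : ℝ, l1*l2*z^3 - (l1*l2 + l1*m2 + l1*e2 + m1*l2 + e1*l2)*z^2
          + (l1*m2 + m1*l2 + m1*m2 + m1*e2 + e1*m2)*z - m1*m2
          = l1*l2*(z - x1)*(z - x2)*(z - x3)) ∧
      1 < x1 ∧ 1 < x2 ∧ 0 < x3 ∧ x3 < 1 := by
  have ha : 0 < l1*l2 := mul_pos hl1 hl2
  have h0 : -(m1*m2) < 0 := by nlinarith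
  have h1 : 0 < l1*l2 + -(l1*l2 + l1*m2 + l1*e2 + m1*l2 + e1*l2)
      + (l1*m2 + m1*l2 + m1*m2 + m1*e2 + e1*m2) + -(m1*m2) := by nlinarith
  have key : ∃ u : ℝ, 1 < u ∧
      l1*l2*u^3 + -(l1*l2 + l1*m2 + l1*e2 + m1*l2 + e1*l2)*u^2
        + (l1*m2 + m1*l2 + m1*m2 + m1*e2 + e1*m2)*u + -(m1*m2) < 0 := by
    by_cases hdeg : l1*m2 = l2*m1
    · -- degenerate case: m1/l1 = m2/l2 =: r
      have hm1r : m1 = l1 * (m1/l1) := by field_simp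
      have hm2r : m2 = l2 * (m1/l1) := by
        field_simp
        linarith [hdeg]
      set r : ℝ := m1/l1 with hrdef
      have hc0 : 0 < e2*l1 + e1*l2 := by positivity
      have hr1 : 1 < r := by
        have hrc : e1*(m2 - l2) + e2*(m1 - l1) = (r - 1) * (e2*l1 + e1*l2) := by
          rw [hm1r, hm2r]; ring
        nlinarith [hstab, hrc]
      set ε : ℝ := min 1 (r*(e2*l1 + e1*l2)/(2*l1*l2*(r+1))) with hεdef
      have hεpos : 0 < ε := by
        apply lt_min one_pos
        positivity
      have hε1 : ε ≤ 1 := min_le_left _ _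
      have hε2 : ε ≤ r*(e2*l1 + e1*l2)/(2*l1*l2*(r+1)) := min_le_right _ _
      have hε2' : l1*l2*ε*(r+1) ≤ r*(e2*l1 + e1*l2)/2 := by
        rw [le_div_iff₀ (by positivity : (0:ℝ) < 2*l1*l2*(r+1))] at hε2
        nlinarith
      refine ⟨r + ε, by linarith, ?_⟩
      have expand : l1*l2*(r+ε)^3 + -(l1*l2 + l1*m2 + l1*e2 + m1*l2 + e1*l2)*(r+ε)^2
          + (l1*m2 + m1*l2 + m1*m2 + m1*e2 + e1*m2)*(r+ε) + -(m1*m2)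
          = ε * (l1*l2*ε*(r+ε-1) - (r+ε)*(e2*l1 + e1*l2)) := by
        rw [hm1r, hm2r]; ring
      rw [expand]
      have hA : l1*l2*ε*(r+ε-1) ≤ l1*l2*ε*(r+1) := by
        apply mul_le_mul_of_nonneg_left (by linarith) (by positivity)
      have hB : r*(e2*l1 + e1*l2)/2 < (r+ε)*(e2*l1 + e1*l2) := by nlinarith
      have hC : 0 < ε * ((r+ε)*(e2*l1 + e1*l2) - l1*l2*ε*(r+ε-1)) :=
        mul_pos hεpos (by linarith)
      nlinarith [hC]
    · -- non-degenerate case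
      have hden : (0:ℝ) < e2*l1 + e1*l2 := by positivity
      have hnd : 0 < (e2*m1 + e1*m2) - (e2*l1 + e1*l2) := by nlinarith
      refine ⟨(e2*m1 + e1*m2)/(e2*l1 + e1*l2), ?_, ?_⟩
      · rw [lt_div_iff₀ hden]; linarith
      · have keyid : (e2*l1 + e1*l2)^3 *
            (l1*l2*((e2*m1 + e1*m2)/(e2*l1 + e1*l2))^3
              + -(l1*l2 + l1*m2 + l1*e2 + m1*l2 + e1*l2)*((e2*m1 + e1*m2)/(e2*l1 + e1*l2))^2
              + (l1*m2 + m1*l2 + m1*m2 + m1*e2 + e1*m2)*((e2*m1 + e1*m2)/(e2*l1 + e1*l2))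
              + -(m1*m2))
            = -(e1*e2*(l1*m2 - l2*m1)^2*((e2*m1 + e1*m2) - (e2*l1 + e1*l2))) := by
          field_simp
          ring
        have hsq : 0 < (l1*m2 - l2*m1)^2 := sq_pos_of_ne_zero (sub_ne_zero.mpr hdeg)
        nlinarith [pow_pos hden 3, mul_pos (mul_pos (mul_pos he1 he2) hsq) hnd, keyid]
  obtain ⟨u, hu1, hfu⟩ := key
  obtain ⟨x1, x2, x3, hfac, h1', h2', h3', h4'⟩ :=
    aux_exists_roots (l1*l2) (-(l1*l2 + l1*m2 + l1*e2 + m1*l2 + e1*l2))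
      (l1*m2 + m1*l2 + m1*m2 + m1*e2 + e1*m2) (-(m1*m2)) u ha h0 h1 hu1 hfu
  exact ⟨x1, x2, x3, fun z => by linear_combination hfac z, h1', h2', h3', h4'⟩
end

section
/- Any steady-state solution (q_{n,i}) of the two-environment M/M/1 queue balance equations with probability generating functions G_i(z) = ∑_n z^n q_{n,i} satisfying the normalization G_1(1) + G_2(1) = 1 must satisfy μ1 q_{0,1} + μ2 q_{0,2} = [η1(μ2−λ2) + η2(μ1−λ1)]/(η1+η2). -/
theorem stmt_7 (l1 l2 m1 m2 e1 e2 : ℝ)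
    (hl1 : 0 < l1) (hl2 : 0 < l2) (hm1 : 0 < m1) (hm2 : 0 < m2)
    (he1 : 0 ≤ e1) (he2 : 0 ≤ e2) (he : 0 < e1 + e2)
    (q1 q2 : ℕ → ℝ)
    (hbal10 : -(l1 + e1) * q1 0 + e2 * q2 0 + m1 * q1 1 = 0)
    (hbal1 : ∀ n : ℕ, 1 ≤ n →
      -(l1 + m1 + e1) * q1 n + e2 * q2 n + m1 * q1 (n+1) + l1 * q1 (n-1) = 0)
    (hbal20 : -(l2 + e2) * q2 0 + e1 * q1 0 + m2 * q2 1 = 0)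
    (hbal2 : ∀ n : ℕ, 1 ≤ n →
      -(l2 + m2 + e2) * q2 n + e1 * q1 n + m2 * q2 (n+1) + l2 * q2 (n-1) = 0)
    (hs1 : Summable q1) (hs2 : Summable q2)
    (hnorm : (∑' n : ℕ, q1 n) + (∑' n : ℕ, q2 n) = 1) :
    m1 * q1 0 + m2 * q2 0 = (e1*(m2 - l2) + e2*(m1 - l1)) / (e1 + e2) := by
  set S1 := ∑' n : ℕ, q1 n with hS1
  set S2 := ∑' n : ℕ, q2 n with hS2
  -- cut balance
  have hD : ∀ n : ℕ, l1 * q1 n + l2 * q2 n = m1 * q1 (n+1) + m2 * q2 (n+1) := by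
    intro n
    induction n with
    | zero => linarith
    | succ k ih =>
      have h1 := hbal1 (k+1) (by omega)
      have h2 := hbal2 (k+1) (by omega)
      simp only [Nat.add_sub_cancel] at h1 h2
      linarith
  -- summability of shifted sequences
  have hs1' : Summable (fun n => q1 (n+1)) := (summable_nat_add_iff 1).2 hs1
  have hs2' : Summable (fun n => q2 (n+1)) := (summable_nat_add_iff 1).2 hs2
  have ht1 : ∑' n : ℕ, q1 (n+1) = S1 - q1 0 := by
    rw [hS1, Summable.tsum_eq_zero_add hs1]; ring
  have ht2 : ∑' n : ℕ, q2 (n+1) = S2 - q2 0 := by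
    rw [hS2, Summable.tsum_eq_zero_add hs2]; ring
  -- sum the cut balance
  have hcut : l1 * S1 + l2 * S2 = m1 * (S1 - q1 0) + m2 * (S2 - q2 0) := by
    have hL : ∑' n : ℕ, (l1 * q1 n + l2 * q2 n) = l1 * S1 + l2 * S2 := by
      rw [Summable.tsum_add (hs1.mul_left l1) (hs2.mul_left l2), tsum_mul_left, tsum_mul_left]
    have hR : ∑' n : ℕ, (m1 * q1 (n+1) + m2 * q2 (n+1))
        = m1 * (S1 - q1 0) + m2 * (S2 - q2 0) := by
      rw [Summable.tsum_add (hs1'.mul_left m1) (hs2'.mul_left m2), tsum_mul_left, tsum_mul_left,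
        ht1, ht2]
    rw [← hL, ← hR]
    exact tsum_congr fun n => by rw [hD n]
  -- telescoping identity for chain 1
  have hT : ∀ N : ℕ, e2 * (∑ k ∈ Finset.range (N+1), q2 k)
      - e1 * (∑ k ∈ Finset.range (N+1), q1 k) + m1 * q1 (N+1) - l1 * q1 N = 0 := by
    intro N
    induction N with
    | zero => simp only [zero_add, Finset.sum_range_one]; linarith
    | succ k ih =>
      have h1 := hbal1 (k+1) (by omega)
      simp only [Nat.add_sub_cancel] at h1
      rw [Finset.sum_range_succ (f := q2), Finset.sum_range_succ (f := q1)]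
      linarith
  -- take the limit
  have hee : e1 * S1 = e2 * S2 := by
    have hP1 : Filter.Tendsto (fun N : ℕ => ∑ k ∈ Finset.range (N+1), q1 k)
        Filter.atTop (nhds S1) :=
      hs1.hasSum.tendsto_sum_nat.comp (Filter.tendsto_add_atTop_nat 1)
    have hP2 : Filter.Tendsto (fun N : ℕ => ∑ k ∈ Finset.range (N+1), q2 k)
        Filter.atTop (nhds S2) :=
      hs2.hasSum.tendsto_sum_nat.comp (Filter.tendsto_add_atTop_nat 1)
    have hz : Filter.Tendsto q1 Filter.atTop (nhds 0) := hs1.tendsto_atTop_zero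
    have hz' : Filter.Tendsto (fun N : ℕ => q1 (N+1)) Filter.atTop (nhds 0) :=
      hz.comp (Filter.tendsto_add_atTop_nat 1)
    have hlim : Filter.Tendsto (fun N : ℕ => e2 * (∑ k ∈ Finset.range (N+1), q2 k)
        - e1 * (∑ k ∈ Finset.range (N+1), q1 k) + m1 * q1 (N+1) - l1 * q1 N)
        Filter.atTop (nhds (e2 * S2 - e1 * S1 + m1 * 0 - l1 * 0)) :=
      (((hP2.const_mul e2).sub (hP1.const_mul e1)).add (hz'.const_mul m1)).sub
        (hz.const_mul l1)
    rw [funext hT] at hlim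
    have := tendsto_nhds_unique hlim tendsto_const_nhds
    linarith [this]
  -- algebra
  have h1 : (e1 + e2) * S1 = e2 := by nlinarith [hee]
  have h2 : (e1 + e2) * S2 = e1 := by nlinarith [hee]
  have key : (e1 + e2) * (m1 * q1 0 + m2 * q2 0)
      = e1 * (m2 - l2) + e2 * (m1 - l1) := by nlinarith [hcut, h1, h2]
  field_simp
  linarith [key]
end

section
/- Suppose η1, η2 > 0 and η1(μ2*−λ2*) + η2(μ1*−λ1*) > 0, with ω1², ω2² > 0. Then the cubic P*(z) = ω1²ω2² z³ + 2[ω1²(λ2*−μ2*) + ω2²(λ1*−μ1*)] z² − 2[ω1²η2 − 2(λ1*−μ1*)(λ2*−μ2*) + ω2²η1] z − 4[η1(λ2*−μ2*) + η2(λ1*−μ1*)] has three real roots, exactly one negative and two positive. -/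
/-!
Writing `a = λ₁* − μ₁*`, `b = λ₂* − μ₂*`, the cubic equals
`z (ω₁² z + 2a)(ω₂² z + 2b) − 2η₂ (ω₁² z + 2a) − 2η₁ (ω₂² z + 2b)`, so at the larger of the zeros
of the two linear factors it takes a value `≤ 0`; the stability condition makes that zero positive.
Since `P*(0) > 0`, the intermediate value theorem gives a root in `(0, t]` and a negative root,
and Vieta's formula for the product of the roots forces the third root to be positive.
-/

section Cubic

variable {K : Type*} [Field K]

theorem cubic_eq_mul_of_roots {a b c d r s : K} (ha : a ≠ 0)
    (hr : a*r^3 + b*r^2 + c*r + d = 0) (hs : a*s^3 + b*s^2 + c*s + d = 0) (hrs : r ≠ s) :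
    ∃ y, ∀ z, a*z^3 + b*z^2 + c*z + d = a*(z - r)*(z - s)*(z - y) := by
  set y := -b/a - r - s
  have hb : b = -a*(r + s + y) := by simp only [y]; field_simp; ring
  have hc : c = a*(r*s + r*y + s*y) := by
    have h : (r - s) * (c - a*(r*s + r*y + s*y)) = 0 := by
      linear_combination hr - hs - (r^2 - s^2) * hb
    exact sub_eq_zero.mp ((mul_eq_zero.mp h).resolve_left (sub_ne_zero.mpr hrs))
  have hd : d = -a*r*s*y := by linear_combination hr - r^2 * hb - r * hc
  exact ⟨y, fun z => by rw [hb, hc, hd]; ring⟩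

end Cubic

section RealCubic

variable {a b c d : ℝ}

theorem exists_neg_cubic_root (ha : 0 < a) (hd : 0 < d) :
    ∃ x < 0, a*x^3 + b*x^2 + c*x + d = 0 := by
  set S := |b| + |c| + |d|
  set M := 1 + S / a
  have hM : 1 ≤ M := le_add_of_nonneg_right (by positivity)
  have haM : a * M = a + S := by simp only [M]; field_simp
  have hM2 : 1 ≤ M^2 := one_le_pow₀ hM
  have hfM : a*(-M)^3 + b*(-M)^2 + c*(-M) + d ≤ 0 := by
    have hb : b * M^2 ≤ |b| * M^2 := by gcongr; exact le_abs_self b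
    have hc : -c * M ≤ |c| * M^2 := by
      nlinarith [neg_le_abs c, abs_nonneg c, mul_le_mul_of_nonneg_left hM (abs_nonneg c)]
    have hd : d ≤ |d| * M^2 := (le_abs_self d).trans (le_mul_of_one_le_right (abs_nonneg d) hM2)
    have hsum : a*(-M)^3 + b*(-M)^2 + c*(-M) + d ≤ M^2 * (S - a * M) := by
      simp only [S]; nlinarith
    rw [haM] at hsum
    nlinarith
  obtain ⟨x, ⟨-, hx0⟩, hx⟩ := intermediate_value_Icc (by linarith)
    (f := fun x => a*x^3 + b*x^2 + c*x + d) (by fun_prop)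
    (show (0:ℝ) ∈ Set.Icc _ (a*0^3 + b*0^2 + c*0 + d) from ⟨hfM, by simp [hd.le]⟩)
  refine ⟨x, lt_of_le_of_ne hx0 ?_, hx⟩
  rintro rfl
  exact hd.ne' (by simpa using hx)

theorem exists_cubic_eq_mul_pos_pos_neg {t : ℝ} (ha : 0 < a) (hd : 0 < d) (ht : 0 < t)
    (hft : a*t^3 + b*t^2 + c*t + d ≤ 0) :
    ∃ x1 x2 x3 : ℝ, (∀ z, a*z^3 + b*z^2 + c*z + d = a*(z - x1)*(z - x2)*(z - x3)) ∧
      0 < x1 ∧ 0 < x2 ∧ x3 < 0 := by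
  obtain ⟨x1, ⟨hx1, -⟩, hfx1⟩ := intermediate_value_Icc' ht.le
    (f := fun x => a*x^3 + b*x^2 + c*x + d) (by fun_prop)
    (show (0:ℝ) ∈ Set.Icc _ (a*0^3 + b*0^2 + c*0 + d) from ⟨hft, by simp [hd.le]⟩)
  have hx1 : 0 < x1 := by
    refine lt_of_le_of_ne hx1 ?_
    rintro rfl
    exact hd.ne' (by simpa using hfx1)
  obtain ⟨x3, hx3, hfx3⟩ := exists_neg_cubic_root (b := b) (c := c) ha hd
  obtain ⟨x2, hfac⟩ := cubic_eq_mul_of_roots ha.ne' hfx1 hfx3 (by linarith)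
  have hx2 : 0 < x2 := by
    have h0 := hfac 0
    nlinarith [mul_pos (mul_pos ha hx1) (neg_pos.mpr hx3)]
  exact ⟨x1, x2, x3, fun z => by rw [hfac z]; ring, hx1, hx2, hx3⟩

end RealCubic

def charCubic (a b e1 e2 w1 w2 z : ℝ) : ℝ :=
  w1*w2*z^3 + 2*(w1*b + w2*a)*z^2 - 2*(w1*e2 - 2*a*b + w2*e1)*z - 4*(e1*b + e2*a)

namespace charCubic

variable {a b e1 e2 w1 w2 : ℝ}

theorem eq_mul_sub (z : ℝ) : charCubic a b e1 e2 w1 w2 z =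
    z*(w1*z + 2*a)*(w2*z + 2*b) - 2*e2*(w1*z + 2*a) - 2*e1*(w2*z + 2*b) := by
  unfold charCubic; ring

theorem symm (z : ℝ) : charCubic a b e1 e2 w1 w2 z = charCubic b a e2 e1 w2 w1 z := by
  unfold charCubic; ring

theorem exists_pos_nonpos (hw1 : 0 < w1) (hw2 : 0 < w2) (he1 : 0 < e1) (he2 : 0 < e2)
    (hab : e1*b + e2*a < 0) : ∃ t > 0, charCubic a b e1 e2 w1 w2 t ≤ 0 := by
  wlog h : b*w1 ≤ a*w2 generalizing a b e1 e2 w1 w2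
  · obtain ⟨t, ht, hPt⟩ := this (a := b) (b := a) hw2 hw1 he2 he1 (by linarith) (by linarith)
    exact ⟨t, ht, by rwa [symm]⟩
  have hb : b < 0 := by
    by_contra! hb
    have ha : 0 ≤ a := nonneg_of_mul_nonneg_left (h.trans' (by positivity)) hw2
    nlinarith [mul_nonneg he1.le hb, mul_nonneg he2.le ha]
  refine ⟨-2*b/w2, div_pos (by linarith) hw2, ?_⟩
  have h2 : w2 * (-2*b/w2) + 2*b = 0 := by field_simp; ring
  have h1 : 0 ≤ w1 * (-2*b/w2) + 2*a := by
    rw [show w1 * (-2*b/w2) + 2*a = 2*(a*w2 - b*w1)/w2 by field_simp; ring]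
    have := sub_nonneg.mpr h
    positivity
  rw [eq_mul_sub, h2]
  nlinarith

end charCubic

theorem stmt_12 (l1 l2 m1 m2 e1 e2 w1 w2 : ℝ)
    (hw1 : 0 < w1) (hw2 : 0 < w2) (he1 : 0 < e1) (he2 : 0 < e2)
    (hstab : 0 < e1*(m2 - l2) + e2*(m1 - l1)) :
    ∃ x1 x2 x3 : ℝ,
      (∀ z : ℝ, w1*w2*z^3 + 2*(w1*(l2 - m2) + w2*(l1 - m1))*z^2
          - 2*(w1*e2 - 2*(l1 - m1)*(l2 - m2) + w2*e1)*z
          - 4*(e1*(l2 - m2) + e2*(l1 - m1))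
          = w1*w2*(z - x1)*(z - x2)*(z - x3)) ∧
      0 < x1 ∧ 0 < x2 ∧ x3 < 0 := by
  obtain ⟨t, ht, hPt⟩ :=
    charCubic.exists_pos_nonpos (a := l1 - m1) (b := l2 - m2) hw1 hw2 he1 he2 (by linarith)
  obtain ⟨x1, x2, x3, hfac, hx1, hx2, hx3⟩ := exists_cubic_eq_mul_pos_pos_neg
    (b := 2*(w1*(l2 - m2) + w2*(l1 - m1))) (c := -2*(w1*e2 - 2*(l1 - m1)*(l2 - m2) + w2*e1))
    (mul_pos hw1 hw2) (by linarith : 0 < -4*(e1*(l2 - m2) + e2*(l1 - m1))) ht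
    (by unfold charCubic at hPt; linarith)
  exact ⟨x1, x2, x3, fun z => by linear_combination hfac z, hx1, hx2, hx3⟩
end

section
/- Let λ2* < μ2*, η1 > 0, ω1², ω2² > 0, p ∈ [0,1], y > 0, and let ζ1(0) = [(λ1*−μ1*) + √((λ1*−μ1*)² + 2ω1²η1)]/ω1². Then the function E(y) = y/(μ2*−λ2*) + (p/η1)(1 − (μ1*−λ1*)/(μ2*−λ2*))(1 − e^{−y ζ1(0)}) equals −K'(0|y), the negative derivative at s = 0 of K(s|y) = p e^{−yζ1(s)} + (1−p) e^{−yθ1(s)} + 2η1 p [e^{−yζ1(s)} − e^{−yθ1(s)}]/(ω1²[ζ1(s)−θ1(s)][ζ2(s)−θ1(s)]), where ζ1(s), ζ2(s) = [(λ1*−μ1*) ± √((λ1*−μ1*)² + 2ω1²(s+η1))]/ω1² and θ1(s) = [(λ2*−μ2*) + √((λ2*−μ2*)² + 2ω2²s)]/ω2². -/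
/-!
Write `K = p A + (1 - p) B + 2 η₁ p (A - B) / D` with `A = exp (-y ζ₁)`, `B = exp (-y θ₁)` and
`D = ω₁ (ζ₁ - θ₁) (ζ₂ - θ₁)`. Since `λ₂* < μ₂*`, `θ₁(0) = 0`, so `B(0) = 1`; and `ζ₁, ζ₂` are the roots of
`ω₁ z² / 2 - (λ₁* - μ₁*) z - (s + η₁)`, so by Vieta `D(0) = -2 η₁`. As the roots have derivatives
`±1/√(…)` at `0`, also `D'(0) = -2 (1 - (μ₁* - λ₁*)/(μ₂* - λ₂*))`, and in the quotient rule the two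
`p y A(0) ζ₁'(0)` terms cancel.
-/

open Real

section QuadraticRoots

variable {β ω x : ℝ}

lemma hasDerivAt_add_sqrt_div (hω : ω ≠ 0) (h : 0 < β ^ 2 + 2 * ω * x) :
    HasDerivAt (fun s => (β + √(β ^ 2 + 2 * ω * s)) / ω) (1 / √(β ^ 2 + 2 * ω * x)) x := by
  have hd : HasDerivAt (fun s => β ^ 2 + 2 * ω * s) (2 * ω) x := by
    simpa using ((hasDerivAt_id x).const_mul (2 * ω)).const_add (β ^ 2)
  have hr : √(β ^ 2 + 2 * ω * x) ≠ 0 := (Real.sqrt_pos.2 h).ne'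
  refine ((hd.sqrt h.ne').const_add β).div_const ω |>.congr_deriv ?_
  field_simp

lemma hasDerivAt_sub_sqrt_div (hω : ω ≠ 0) (h : 0 < β ^ 2 + 2 * ω * x) :
    HasDerivAt (fun s => (β - √(β ^ 2 + 2 * ω * s)) / ω) (-(1 / √(β ^ 2 + 2 * ω * x))) x := by
  have hd : HasDerivAt (fun s => β ^ 2 + 2 * ω * s) (2 * ω) x := by
    simpa using ((hasDerivAt_id x).const_mul (2 * ω)).const_add (β ^ 2)
  have hr : √(β ^ 2 + 2 * ω * x) ≠ 0 := (Real.sqrt_pos.2 h).ne'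
  refine ((hd.sqrt h.ne').const_sub β).div_const ω |>.congr_deriv ?_
  field_simp

lemma add_sqrt_sq_div_eq_zero_of_neg (hβ : β < 0) : (β + √(β ^ 2 + 2 * ω * 0)) / ω = 0 := by
  simp [Real.sqrt_sq_eq_abs, abs_of_neg hβ]

lemma mul_add_sqrt_div_mul_sub_sqrt_div (hω : ω ≠ 0) (h : 0 ≤ β ^ 2 + 2 * ω * x) :
    ω * ((β + √(β ^ 2 + 2 * ω * x)) / ω) * ((β - √(β ^ 2 + 2 * ω * x)) / ω) = -2 * x := by
  have hr := Real.sq_sqrt h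
  set r := √(β ^ 2 + 2 * ω * x)
  field_simp
  linear_combination -hr

end QuadraticRoots

noncomputable def firstPassageLaplace (p y η ω : ℝ) (ζ₁ ζ₂ θ : ℝ → ℝ) (s : ℝ) : ℝ :=
  p * exp (-y * ζ₁ s) + (1 - p) * exp (-y * θ s)
    + 2*η*p * (exp (-y * ζ₁ s) - exp (-y * θ s)) / (ω * (ζ₁ s - θ s) * (ζ₂ s - θ s))

theorem hasDerivAt_firstPassageLaplace_zero {p y η ω a c R : ℝ} {ζ₁ ζ₂ θ : ℝ → ℝ}
    (hη : η ≠ 0) (hc : c ≠ 0) (hR : R ≠ 0)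
    (hζ₁ : HasDerivAt ζ₁ (1 / R) 0) (hζ₂ : HasDerivAt ζ₂ (-(1 / R)) 0)
    (hθ : HasDerivAt θ (1 / c) 0) (hθ0 : θ 0 = 0)
    (hprod : ω * ζ₁ 0 * ζ₂ 0 = -2 * η) (hsum : ω * (ζ₁ 0 + ζ₂ 0) = -2 * a)
    (hdiff : ω * (ζ₁ 0 - ζ₂ 0) = 2 * R) :
    HasDerivAt (firstPassageLaplace p y η ω ζ₁ ζ₂ θ)
      (-(y / c + p / η * (1 - a / c) * (1 - exp (-y * ζ₁ 0)))) 0 := by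
  have hA := (hζ₁.const_mul (-y)).exp
  have hB := (hθ.const_mul (-y)).exp
  have hD : HasDerivAt (fun s => ω * (ζ₁ s - θ s) * (ζ₂ s - θ s))
      (ω * (1 / R - 1 / c) * (ζ₂ 0 - θ 0) + ω * (ζ₁ 0 - θ 0) * (-(1 / R) - 1 / c)) 0 :=
    ((hζ₁.sub hθ).const_mul ω).mul (hζ₂.sub hθ)
  have hD0 : ω * (ζ₁ 0 - θ 0) * (ζ₂ 0 - θ 0) ≠ 0 := by
    rw [hθ0, sub_zero, sub_zero, hprod]
    simpa using hη
  refine (((hA.const_mul p).add (hB.const_mul (1 - p))).add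
    (((hA.sub hB).const_mul (2 * η * p)).div hD hD0)).congr_deriv ?_
  have hD'0 : ω * (1 / R - 1 / c) * ζ₂ 0 + ω * ζ₁ 0 * (-(1 / R) - 1 / c) = -2 * (1 - a / c) := by
    field_simp
    linear_combination (-c) * hdiff - R * hsum
  simp only [hθ0, Pi.sub_apply, sub_zero, mul_zero, exp_zero, hprod, hD'0]
  field_simp
  ring

theorem stmt_17_general (l1 m1 l2 m2 e1 w1 w2 p y : ℝ)
    (hstab : l2 < m2) (he1 : 0 < e1) (hw1 : 0 < w1) (hw2 : 0 < w2)
    (zeta1 zeta2 theta1 : ℝ → ℝ) (K : ℝ → ℝ)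
    (hz1 : ∀ s, zeta1 s = ((l1 - m1) + Real.sqrt ((l1 - m1)^2 + 2*w1*(s + e1))) / w1)
    (hz2 : ∀ s, zeta2 s = ((l1 - m1) - Real.sqrt ((l1 - m1)^2 + 2*w1*(s + e1))) / w1)
    (ht1 : ∀ s, theta1 s = ((l2 - m2) + Real.sqrt ((l2 - m2)^2 + 2*w2*s)) / w2)
    (hK : ∀ s, K s = p * Real.exp (-y * zeta1 s) + (1 - p) * Real.exp (-y * theta1 s)
        + 2*e1*p * (Real.exp (-y * zeta1 s) - Real.exp (-y * theta1 s))
          / (w1 * (zeta1 s - theta1 s) * (zeta2 s - theta1 s))) :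
    y/(m2 - l2) + (p/e1) * (1 - (m1 - l1)/(m2 - l2)) * (1 - Real.exp (-y * zeta1 0))
      = -(deriv K 0) := by
  have hdisc : 0 < (l1 - m1) ^ 2 + 2 * w1 * (0 + e1) := by positivity
  set R := √((l1 - m1) ^ 2 + 2 * w1 * (0 + e1))
  have hζ₁ : HasDerivAt zeta1 (1 / R) 0 := by
    rw [funext hz1]
    exact (hasDerivAt_add_sqrt_div hw1.ne' hdisc).comp_add_const 0 e1
  have hζ₂ : HasDerivAt zeta2 (-(1 / R)) 0 := by
    rw [funext hz2]
    exact (hasDerivAt_sub_sqrt_div hw1.ne' hdisc).comp_add_const 0 e1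
  have hθ : HasDerivAt theta1 (1 / (m2 - l2)) 0 := by
    have hb : l2 - m2 < 0 := by linarith
    rw [funext ht1]
    convert hasDerivAt_add_sqrt_div hw2.ne' (β := l2 - m2) (x := 0)
      (by simpa using sq_pos_of_neg hb) using 2
    simp [Real.sqrt_sq_eq_abs, abs_of_neg hb]
  have hθ0 : theta1 0 = 0 := by
    rw [ht1]
    exact add_sqrt_sq_div_eq_zero_of_neg (by linarith)
  have hprod : w1 * zeta1 0 * zeta2 0 = -2 * e1 := by
    rw [hz1, hz2]
    simpa using mul_add_sqrt_div_mul_sub_sqrt_div hw1.ne' hdisc.le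
  have hsum : w1 * (zeta1 0 + zeta2 0) = -2 * (m1 - l1) := by
    rw [hz1, hz2]
    field_simp
    ring
  have hdiff : w1 * (zeta1 0 - zeta2 0) = 2 * R := by
    simp only [hz1, hz2, R]
    field_simp
    ring
  have hKF : K = firstPassageLaplace p y e1 w1 zeta1 zeta2 theta1 := funext hK
  rw [hKF, (hasDerivAt_firstPassageLaplace_zero he1.ne' (by linarith) (Real.sqrt_pos.2 hdisc).ne'
    hζ₁ hζ₂ hθ hθ0 hprod hsum hdiff).deriv, neg_neg]

theorem stmt_17 (l1 m1 l2 m2 e1 w1 w2 p y : ℝ)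
    (hstab : l2 < m2) (he1 : 0 < e1) (hw1 : 0 < w1) (hw2 : 0 < w2)
    (hp0 : 0 ≤ p) (hp1 : p ≤ 1) (hy : 0 < y)
    (zeta1 zeta2 theta1 : ℝ → ℝ) (K : ℝ → ℝ)
    (hz1 : ∀ s, zeta1 s = ((l1 - m1) + Real.sqrt ((l1 - m1)^2 + 2*w1*(s + e1))) / w1)
    (hz2 : ∀ s, zeta2 s = ((l1 - m1) - Real.sqrt ((l1 - m1)^2 + 2*w1*(s + e1))) / w1)
    (ht1 : ∀ s, theta1 s = ((l2 - m2) + Real.sqrt ((l2 - m2)^2 + 2*w2*s)) / w2)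
    (hK : ∀ s, K s = p * Real.exp (-y * zeta1 s) + (1 - p) * Real.exp (-y * theta1 s)
        + 2*e1*p * (Real.exp (-y * zeta1 s) - Real.exp (-y * theta1 s))
          / (w1 * (zeta1 s - theta1 s) * (zeta2 s - theta1 s))) :
    y/(m2 - l2) + (p/e1) * (1 - (m1 - l1)/(m2 - l2)) * (1 - Real.exp (-y * zeta1 0))
      = -(deriv K 0) :=
  stmt_17_general l1 m1 l2 m2 e1 w1 w2 p y hstab he1 hw1 hw2 zeta1 zeta2 theta1 K hz1 hz2 ht1 hK
end
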